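/- Let Φ be a positive unital linear map, A a positive invertible operator with m·I ≤ A ≤ M·I for 0 < m ≤ M, and p ≥ 1. Then Φ(A^p) ≤ K(m,M,p) · Φ(A)^p, where K(m,M,p) is the generalized Kantorovich constant ((p−1)^{p−1}/p^p)·(M^p − m^p)^p/((M−m)(mM^p − Mm^p)^{p−1}). -/

import Mathlib

/-!
Since `t ↦ t ^ p` is convex, it lies below its chord `t ↦ μ t - c` over `[m, M]`, hence
`A ^ p ≤ μ A - c` by the continuous functional calculus. A positive unital map is monotone and preserves affine
expressions in `A`, so `Φ (A ^ p) ≤ μ Φ A - c`. Finally `K(m, M, p)` is exactly the constant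
for which the graph of `t ↦ K t ^ p` is tangent to the chord line, so `μ t - c ≤ K t ^ p` for
all `t ≥ 0`; applied through the functional calculus of `Φ A ≥ 0` this gives the claim.
-/

/-- The generalized Kantorovich (Ky Fan–Furuta) constant
`K(m,M,p) = ((p-1)^{p-1}/p^p) · (M^p - m^p)^p / ((M-m)(m M^p - M m^p)^{p-1})`. -/
noncomputable def kantorovichConst (m M p : ℝ) : ℝ :=
  ((p - 1) ^ (p - 1) / p ^ p) * (M ^ p - m ^ p) ^ p /
    ((M - m) * (m * M ^ p - M * m ^ p) ^ (p - 1))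

open Set

theorem ConvexOn.le_chord {f : ℝ → ℝ} {a b x : ℝ} (hf : ConvexOn ℝ (Icc a b) f)
    (hab : a < b) (hx : x ∈ Icc a b) :
    f x ≤ ((b - x) * f a + (x - a) * f b) / (b - a) := by
  have hba : 0 < b - a := sub_pos.2 hab
  have hconv := hf.2 (left_mem_Icc.2 hab.le) (right_mem_Icc.2 hab.le)
    (div_nonneg (sub_nonneg.2 hx.2) hba.le) (div_nonneg (sub_nonneg.2 hx.1) hba.le)
    (by field_simp; ring)
  have hcomb : ((b - x) / (b - a)) • a + ((x - a) / (b - a)) • b = x := by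
    simp only [smul_eq_mul]; field_simp; ring
  rw [hcomb] at hconv
  simpa only [smul_eq_mul, ← add_div, div_mul_eq_mul_div] using hconv

theorem Real.rpow_le_chord {m M p t : ℝ} (hm : 0 ≤ m) (hmM : m < M) (hp : 1 ≤ p)
    (ht : t ∈ Icc m M) :
    t ^ p ≤ (M ^ p - m ^ p) / (M - m) * t - (m * M ^ p - M * m ^ p) / (M - m) := by
  have hMm : M - m ≠ 0 := (sub_pos.2 hmM).ne'
  calc t ^ p ≤ ((M - t) * m ^ p + (t - m) * M ^ p) / (M - m) :=
        ((convexOn_rpow hp).subset (Icc_subset_Ici_self.trans (Ici_subset_Ici.2 hm))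
          (convex_Icc m M)).le_chord hmM ht
    _ = _ := by field_simp; ring

theorem Real.rpow_add_mul_sub_le_rpow {p s t : ℝ} (hp : 1 ≤ p) (hs : 0 < s) (ht : 0 ≤ t) :
    s ^ p + p * s ^ (p - 1) * (t - s) ≤ t ^ p := by
  have hbern := one_add_mul_self_le_rpow_one_add
    (by linarith [div_nonneg ht hs.le] : (-1 : ℝ) ≤ t / s - 1) hp
  rw [add_sub_cancel, Real.div_rpow ht hs.le] at hbern
  have hsp : 0 < s ^ p := Real.rpow_pos_of_pos hs p
  rw [Real.rpow_sub_one hs.ne']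
  calc s ^ p + p * (s ^ p / s) * (t - s) = s ^ p * (1 + p * (t / s - 1)) := by
        field_simp
    _ ≤ s ^ p * (t ^ p / s ^ p) := mul_le_mul_of_nonneg_left hbern hsp.le
    _ = t ^ p := by field_simp

theorem Real.mul_sub_le_mul_rpow {p μ a t : ℝ} (hp : 1 < p) (hμ : 0 < μ) (ha : 0 < a)
    (ht : 0 ≤ t) :
    μ * t - a ≤ (p - 1) ^ (p - 1) / p ^ p * μ ^ p / a ^ (p - 1) * t ^ p := by
  have hp0 : 0 < p := zero_lt_one.trans hp
  have hp1 : 0 < p - 1 := sub_pos.2 hp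
  -- with `C` the constant on the right, the tangent of `t ↦ C * t ^ p` at `s` is `t ↦ μ * t - a`
  set s := p * a / ((p - 1) * μ) with hs
  have hs0 : 0 < s := by positivity
  have htan := Real.rpow_add_mul_sub_le_rpow hp.le hs0 ht
  have hsp : s ^ p = p ^ p * a ^ p / ((p - 1) ^ p * μ ^ p) := by
    rw [hs, Real.div_rpow (by positivity) (by positivity), Real.mul_rpow hp0.le ha.le,
      Real.mul_rpow hp1.le hμ.le]
  have hcoef : (p - 1) ^ (p - 1) / p ^ p * μ ^ p / a ^ (p - 1) = a / ((p - 1) * s ^ p) := by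
    rw [hsp, Real.rpow_sub_one hp1.ne', Real.rpow_sub_one ha.ne']
    field_simp
  have hline : μ * t - a = a / ((p - 1) * s ^ p) * (s ^ p + p * s ^ (p - 1) * (t - s)) := by
    rw [Real.rpow_sub_one hs0.ne', hs]
    field_simp
    ring
  rw [hcoef, hline]
  exact mul_le_mul_of_nonneg_left htan (by positivity)

theorem Real.mul_rpow_sub_mul_rpow_pos {m M p : ℝ} (hm : 0 < m) (hmM : m < M) (hp : 1 < p) :
    0 < m * M ^ p - M * m ^ p := by
  have hM : 0 < M := hm.trans hmM
  have hlt : m ^ (p - 1) < M ^ (p - 1) := Real.rpow_lt_rpow hm.le hmM (sub_pos.2 hp)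
  have hMp : M ^ p = M ^ (p - 1) * M := by rw [Real.rpow_sub_one hM.ne']; field_simp
  have hmp : m ^ p = m ^ (p - 1) * m := by rw [Real.rpow_sub_one hm.ne']; field_simp
  rw [hMp, hmp]
  nlinarith [mul_pos hm hM]

theorem kantorovichConst_eq_of_one_lt {m M p : ℝ} (hm : 0 < m) (hmM : m < M) (hp : 1 < p) :
    kantorovichConst m M p = (p - 1) ^ (p - 1) / p ^ p *
      ((M ^ p - m ^ p) / (M - m)) ^ p / ((m * M ^ p - M * m ^ p) / (M - m)) ^ (p - 1) := by
  have hMm : 0 < M - m := sub_pos.2 hmM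
  have hsl : 0 ≤ M ^ p - m ^ p :=
    sub_nonneg.2 (Real.rpow_le_rpow hm.le hmM.le (zero_le_one.trans hp.le))
  rw [kantorovichConst, Real.div_rpow hsl hMm.le,
    Real.div_rpow (Real.mul_rpow_sub_mul_rpow_pos hm hmM hp).le hMm.le, Real.rpow_sub_one hMm.ne']
  field_simp

theorem kantorovichConst_one {m M : ℝ} (hmM : m ≠ M) : kantorovichConst m M 1 = 1 := by
  have hMm : M - m ≠ 0 := sub_ne_zero.2 hmM.symm
  simp [kantorovichConst, hMm]

theorem chord_le_kantorovichConst_mul_rpow {m M p t : ℝ} (hm : 0 < m) (hmM : m < M)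
    (hp : 1 ≤ p) (ht : 0 ≤ t) :
    (M ^ p - m ^ p) / (M - m) * t - (m * M ^ p - M * m ^ p) / (M - m)
      ≤ kantorovichConst m M p * t ^ p := by
  have hMm : 0 < M - m := sub_pos.2 hmM
  rcases hp.eq_or_lt with rfl | hp
  · rw [kantorovichConst_one hmM.ne]
    simp only [Real.rpow_one, mul_comm M m, sub_self, zero_div, sub_zero, one_mul]
    rw [div_self hMm.ne', one_mul]
  · rw [kantorovichConst_eq_of_one_lt hm hmM hp]
    exact Real.mul_sub_le_mul_rpow hp
      (div_pos (sub_pos.2 (Real.rpow_lt_rpow hm.le hmM (zero_lt_one.trans hp))) hMm)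
      (div_pos (Real.mul_rpow_sub_mul_rpow_pos hm hmM hp) hMm) ht

section CStarAlgebra

variable {A : Type*} [CStarAlgebra A]

theorem cfc_mul_sub_const {a : A} (ha : IsSelfAdjoint a) (μ c : ℝ) :
    cfc (fun x : ℝ => μ * x - c) a = μ • a - c • (1 : A) := by
  rw [cfc_sub .., cfc_const_mul_id μ a, cfc_const c a, Algebra.algebraMap_eq_smul_one]

variable [PartialOrder A] [StarOrderedRing A]

theorem spectrum_subset_Icc_of_smul_one_le {a : A} {m M : ℝ} (ha : IsSelfAdjoint a)
    (h1 : m • (1 : A) ≤ a) (h2 : a ≤ M • (1 : A)) : spectrum ℝ a ⊆ Icc m M := by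
  rw [← Algebra.algebraMap_eq_smul_one] at h1 h2
  exact fun x hx => ⟨(algebraMap_le_iff_le_spectrum ha).1 h1 x hx,
    (le_algebraMap_iff_spectrum_le ha).1 h2 x hx⟩

theorem CFC.rpow_le_chord {a : A} {m M p : ℝ} (hm : 0 ≤ m) (hmM : m < M) (hp : 1 ≤ p)
    (h1 : m • (1 : A) ≤ a) (h2 : a ≤ M • (1 : A)) :
    a ^ p ≤ ((M ^ p - m ^ p) / (M - m)) • a - ((m * M ^ p - M * m ^ p) / (M - m)) • (1 : A) := by
  have ha : 0 ≤ a := (smul_nonneg hm zero_le_one).trans h1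
  have hspec := spectrum_subset_Icc_of_smul_one_le ha.isSelfAdjoint h1 h2
  have hcont : Continuous fun t : ℝ => t ^ p := Real.continuous_rpow_const (zero_le_one.trans hp)
  rw [CFC.rpow_eq_cfc_real ha, ← cfc_mul_sub_const ha.isSelfAdjoint]
  exact cfc_mono (fun t ht => Real.rpow_le_chord hm hmM hp (hspec ht)) hcont.continuousOn

theorem CFC.chord_le_kantorovichConst_smul_rpow {b : A} {m M p : ℝ} (hm : 0 < m)
    (hmM : m < M) (hp : 1 ≤ p) (hb : 0 ≤ b) :
    ((M ^ p - m ^ p) / (M - m)) • b - ((m * M ^ p - M * m ^ p) / (M - m)) • (1 : A)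
      ≤ kantorovichConst m M p • b ^ p := by
  have hcont : Continuous fun t : ℝ => t ^ p := Real.continuous_rpow_const (zero_le_one.trans hp)
  rw [CFC.rpow_eq_cfc_real hb, ← cfc_const_mul _ _ _ hcont.continuousOn,
    ← cfc_mul_sub_const hb.isSelfAdjoint]
  exact cfc_mono
    (fun t ht => chord_le_kantorovichConst_mul_rpow hm hmM hp (spectrum_nonneg_of_nonneg hb ht))
    (by fun_prop) (continuous_const.mul hcont).continuousOn

end CStarAlgebra

theorem map_rpow_le_kantorovich_rpow_map_general
    {H K : Type*} [NormedAddCommGroup H] [InnerProductSpace ℂ H] [CompleteSpace H]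
    [NormedAddCommGroup K] [InnerProductSpace ℂ K] [CompleteSpace K]
    (Φ : (H →L[ℂ] H) →ₗ[ℂ] (K →L[ℂ] K))
    (hΦ1 : Φ 1 = 1) (hΦpos : ∀ a : H →L[ℂ] H, 0 ≤ a → 0 ≤ Φ a)
    (A : H →L[ℂ] H) (hA : 0 ≤ A)
    (m M : ℝ) (hm : 0 < m) (hmM : m < M)
    (h1 : m • (1 : H →L[ℂ] H) ≤ A) (h2 : A ≤ M • (1 : H →L[ℂ] H))
    (p : ℝ) (hp : 1 ≤ p) :
    Φ (A ^ p) ≤ kantorovichConst m M p • (Φ A) ^ p := by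
  set μ := (M ^ p - m ^ p) / (M - m)
  set c := (m * M ^ p - M * m ^ p) / (M - m)
  calc Φ (A ^ p) ≤ Φ (μ • A - c • 1) :=
        OrderHomClass.mono (PositiveLinearMap.mk₀ Φ hΦpos) (CFC.rpow_le_chord hm.le hmM hp h1 h2)
    _ = μ • Φ A - c • 1 := by rw [map_sub, Φ.map_smul_of_tower, Φ.map_smul_of_tower, hΦ1]
    _ ≤ kantorovichConst m M p • Φ A ^ p :=
        CFC.chord_le_kantorovichConst_smul_rpow hm hmM hp (hΦpos A hA)

/-- For a positive unital linear map `Φ`, a positive invertible operator `A` with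
`m • 1 ≤ A ≤ M • 1`, `0 < m < M`, and real `p ≥ 1`,
`Φ(A^p) ≤ K(m,M,p) • Φ(A)^p`. -/
theorem map_rpow_le_kantorovich_rpow_map
    {H K : Type*} [NormedAddCommGroup H] [InnerProductSpace ℂ H] [CompleteSpace H]
    [NormedAddCommGroup K] [InnerProductSpace ℂ K] [CompleteSpace K]
    (Φ : (H →L[ℂ] H) →ₗ[ℂ] (K →L[ℂ] K))
    (hΦ1 : Φ 1 = 1) (hΦpos : ∀ a : H →L[ℂ] H, 0 ≤ a → 0 ≤ Φ a)
    (A : H →L[ℂ] H) (hA : 0 ≤ A) (hinv : Invertible A)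
    (m M : ℝ) (hm : 0 < m) (hmM : m < M)
    (h1 : m • (1 : H →L[ℂ] H) ≤ A) (h2 : A ≤ M • (1 : H →L[ℂ] H))
    (p : ℝ) (hp : 1 ≤ p) :
    Φ (A ^ p) ≤ kantorovichConst m M p • (Φ A) ^ p :=
  map_rpow_le_kantorovich_rpow_map_general Φ hΦ1 hΦpos A hA m M hm hmM h1 h2 p hp
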